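/- Assume quasi-symmetry. Let ξ be a nonzero linear functional on ℝ^k, set I = {i : ξ(β_i) ≤ 0} and J = {i : ξ(β_i) = 0}. Then A_I ∩ A_J = Aff(F_ξ), where A_L = −β_L − C_L + ∇ for L ⊆ {1,…,N}, and F_ξ = {x∈∇ : ξ(x) = max_{y∈∇} ξ(y)} is the face of ∇ exposed by ξ and Aff denotes affine hull. -/

import Mathlib

open Pointwise
open scoped Classical

noncomputable section

/-- The zonotope `∇ = (1/2)∑_i [0, β_i]`. -/
def nabla {N k : ℕ} (β : Fin N → (Fin k → ℝ)) : Set (Fin k → ℝ) :=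
  (2⁻¹ : ℝ) • ∑ i : Fin N, segment ℝ 0 (β i)

/-- The convex cone `C_L` generated by `{β_i : i ∈ L}`. -/
def coneI {N k : ℕ} (β : Fin N → (Fin k → ℝ)) (L : Finset (Fin N)) :
    Set (Fin k → ℝ) :=
  {y | ∃ c : Fin N → ℝ, (∀ i, 0 ≤ c i) ∧ (∀ i, i ∉ L → c i = 0) ∧
    y = ∑ i, c i • β i}

/-- `A_L = −β_L − C_L + ∇`. -/
def AI {N k : ℕ} (β : Fin N → (Fin k → ℝ)) (L : Finset (Fin N)) :
    Set (Fin k → ℝ) :=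
  {x | ∃ c ∈ coneI β L, ∃ nn ∈ nabla β, x = -(∑ i ∈ L, β i) - c + nn}

/-- The face `F_ξ` of `∇` exposed by the linear functional `ξ`. -/
def exposedFace {N k : ℕ} (β : Fin N → (Fin k → ℝ))
    (ξ : (Fin k → ℝ) →ₗ[ℝ] ℝ) : Set (Fin k → ℝ) :=
  {x ∈ nabla β | ∀ y ∈ nabla β, ξ y ≤ ξ x}

/-!
The zonotope `∇` consists of the points `½ ∑ sᵢ βᵢ` with `sᵢ ∈ [0, 1]`, so `ξ` is maximised on it
exactly by the coefficients `sᵢ = 1` for `ξ(βᵢ) > 0` and `sᵢ = 0` for `ξ(βᵢ) < 0`; hence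
`F_ξ = p + ½ ∑_{i ∈ J} [0, βᵢ]` with `p = ½ ∑_{ξ(βᵢ) > 0} βᵢ`, and `Aff(F_ξ) = p + span {βᵢ : i ∈ J}`.
Quasi-symmetry gives `∑ᵢ βᵢ = 0` and `β_J = 0`. The first makes `∇ = -∇` and `-β_I = 2p`; the
second makes `C_J` the whole span of `{βᵢ : i ∈ J}`, so `A_J = ∇ + span {βᵢ : i ∈ J}`. A point of
`A_J` has `ξ ≤ ξ(p)` and a point of `A_I = 2p - C_I + ∇` has `ξ ≥ ξ(p)`. So a common point is
`n + v` with `v ∈ span {βᵢ : i ∈ J}` and `n ∈ ∇` at the level `ξ(p)`, i.e. `n ∈ F_ξ`.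
-/

open Finset

def QuasiSymmetric (K : Type*) {ι V : Type*} [Field K] [Fintype ι] [AddCommGroup V] [Module K V]
    (β : ι → V) : Prop :=
  ∀ L : Submodule K V, Module.finrank K L = 1 → ∑ i ∈ univ.filter (fun i => β i ∈ L), β i = 0

namespace QuasiSymmetric

variable {K ι V : Type*} [Field K] [Fintype ι] [AddCommGroup V] [Module K V] {β : ι → V}

theorem sum_eq_zero_of_saturated (hqs : QuasiSymmetric K β) (hβ0 : ∀ i, β i ≠ 0)
    {S : Finset ι} (hS : ∀ i ∈ S, ∀ j, β j ∈ K ∙ β i → j ∈ S) : ∑ i ∈ S, β i = 0 := by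
  rw [← sum_fiberwise_of_maps_to fun i hi => mem_image_of_mem (fun i => K ∙ β i) hi]
  refine sum_eq_zero fun L hL => ?_
  obtain ⟨i, hi, rfl⟩ := mem_image.1 hL
  have hline : Module.finrank K (K ∙ β i) = 1 := finrank_span_singleton (hβ0 i)
  have hfiber : S.filter (fun j => K ∙ β j = K ∙ β i) = univ.filter (fun j => β j ∈ K ∙ β i) := by
    ext j
    simp only [mem_filter, mem_univ, true_and]
    exact ⟨fun h => h.2 ▸ Submodule.mem_span_singleton_self _, fun hj =>
      ⟨hS i hi j hj, (eq_span_singleton_of_mem_of_finrank_eq_one hline hj (hβ0 j)).symm⟩⟩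
  rw [hfiber]
  exact hqs _ hline

theorem sum_univ_eq_zero (hqs : QuasiSymmetric K β) (hβ0 : ∀ i, β i ≠ 0) : ∑ i, β i = 0 :=
  hqs.sum_eq_zero_of_saturated hβ0 fun _ _ j _ => mem_univ j

theorem sum_filter_apply_eq_zero (hqs : QuasiSymmetric K β) (hβ0 : ∀ i, β i ≠ 0)
    (ξ : V →ₗ[K] K) : ∑ i ∈ univ.filter (fun i => ξ (β i) = 0), β i = 0 := by
  refine hqs.sum_eq_zero_of_saturated hβ0 fun i hi j hj => ?_
  obtain ⟨t, ht⟩ := Submodule.mem_span_singleton.1 hj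
  simp only [mem_filter, mem_univ, true_and] at hi ⊢
  rw [← ht, map_smul, hi, smul_zero]

end QuasiSymmetric

section Zonotope

variable {N k : ℕ} {β : Fin N → (Fin k → ℝ)}

theorem mem_nabla_iff {x : Fin k → ℝ} :
    x ∈ nabla β ↔ ∃ s : Fin N → ℝ, (∀ i, s i ∈ Set.Icc (0 : ℝ) 1) ∧
      x = (2⁻¹ : ℝ) • ∑ i, s i • β i := by
  simp only [nabla, Set.mem_smul_set, Set.mem_fintype_sum, segment_eq_image, Set.mem_image,
    smul_zero, zero_add]
  constructor
  · rintro ⟨_, ⟨g, hg, rfl⟩, rfl⟩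
    choose s hs hsg using hg
    exact ⟨s, hs, by simp_rw [hsg]⟩
  · rintro ⟨s, hs, rfl⟩
    exact ⟨_, ⟨_, fun i => ⟨s i, hs i, rfl⟩, rfl⟩, rfl⟩

theorem neg_mem_nabla (hβ : ∑ i, β i = 0) {x : Fin k → ℝ} (hx : x ∈ nabla β) :
    -x ∈ nabla β := by
  obtain ⟨s, hs, rfl⟩ := mem_nabla_iff.1 hx
  refine mem_nabla_iff.2 ⟨fun i => 1 - s i,
    fun i => ⟨by linarith [(hs i).2], by linarith [(hs i).1]⟩, ?_⟩
  simp only [sub_smul, one_smul, sum_sub_distrib, hβ, zero_sub, smul_neg]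

theorem coneI_mono {L L' : Finset (Fin N)} (h : L ⊆ L') : coneI β L ⊆ coneI β L' :=
  fun _ ⟨c, hc0, hcL, hy⟩ => ⟨c, hc0, fun i hi => hcL i fun hiL => hi (h hiL), hy⟩

theorem apply_nonpos_of_mem_coneI {L : Finset (Fin N)} (ξ : (Fin k → ℝ) →ₗ[ℝ] ℝ)
    (hL : ∀ i ∈ L, ξ (β i) ≤ 0) {y : Fin k → ℝ} (hy : y ∈ coneI β L) : ξ y ≤ 0 := by
  obtain ⟨c, hc0, hcL, rfl⟩ := hy
  rw [map_sum]
  refine sum_nonpos fun i _ => ?_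
  rw [map_smul, smul_eq_mul]
  by_cases hi : i ∈ L
  · exact mul_nonpos_of_nonneg_of_nonpos (hc0 i) (hL i hi)
  · rw [hcL i hi, zero_mul]

theorem coneI_subset_span (L : Finset (Fin N)) : coneI β L ⊆ Submodule.span ℝ (β '' L) := by
  rintro _ ⟨c, -, hcL, rfl⟩
  refine Submodule.sum_mem _ fun i _ => ?_
  by_cases hi : i ∈ L
  · exact Submodule.smul_mem _ _ (Submodule.subset_span (Set.mem_image_of_mem β hi))
  · rw [hcL i hi, zero_smul]
    exact zero_mem _

theorem span_subset_coneI {L : Finset (Fin N)} (hL : ∑ i ∈ L, β i = 0) :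
    (Submodule.span ℝ (β '' L) : Set (Fin k → ℝ)) ⊆ coneI β L := by
  intro y hy
  obtain ⟨t, rfl⟩ := (Submodule.mem_span_image_finset_iff_exists_fun' ℝ).1 hy
  -- Since `β_L = 0`, raising every coefficient on `L` by `M = ∑ |tᵢ|` makes them nonnegative.
  set M := ∑ i, |t i|
  refine ⟨fun i => if i ∈ L then t i + M else 0, fun i => ?_, fun i hi => if_neg hi, ?_⟩
  · have := single_le_sum (fun j _ => abs_nonneg (t j)) (mem_univ i)
    dsimp only
    split_ifs
    · linarith [neg_abs_le (t i)]
    · exact le_rfl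
  · calc ∑ i ∈ L, t i • β i = ∑ i ∈ L, t i • β i + M • ∑ i ∈ L, β i := by
          rw [hL, smul_zero, add_zero]
      _ = ∑ i, (if i ∈ L then t i + M else 0) • β i := by
          simp only [ite_smul, zero_smul, sum_ite_mem, univ_inter, add_smul, sum_add_distrib,
            smul_sum]

theorem AI_eq_of_sum_eq_zero {L : Finset (Fin N)} (hL : ∑ i ∈ L, β i = 0) :
    AI β L = {x | ∃ n ∈ nabla β, x - n ∈ Submodule.span ℝ (β '' L)} := by
  ext x
  constructor
  · rintro ⟨c, hc, n, hn, rfl⟩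
    exact ⟨n, hn, by simpa [hL] using neg_mem (coneI_subset_span L hc)⟩
  · rintro ⟨n, hn, hx⟩
    exact ⟨-(x - n), span_subset_coneI hL (neg_mem hx), n, hn, by rw [hL]; abel⟩

section Face

variable (β) (ξ : (Fin k → ℝ) →ₗ[ℝ] ℝ)

def topVertex : Fin k → ℝ := (2⁻¹ : ℝ) • ∑ i, (if 0 < ξ (β i) then (1 : ℝ) else 0) • β i

def kerSpan : Submodule ℝ (Fin k → ℝ) :=
  Submodule.span ℝ (β '' ↑(univ.filter fun i => ξ (β i) = 0))

variable {β ξ}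

theorem kerSpan_le_ker : kerSpan β ξ ≤ LinearMap.ker ξ :=
  Submodule.span_le.2 <| by
    rintro _ ⟨i, hi, rfl⟩
    simpa using hi

theorem topVertex_mem_nabla : topVertex β ξ ∈ nabla β :=
  mem_nabla_iff.2 ⟨_, fun i => by split_ifs <;> simp, rfl⟩

theorem sum_filter_nonpos_eq_neg_two_smul_topVertex (hβ : ∑ i, β i = 0) :
    ∑ i ∈ univ.filter (fun i => ξ (β i) ≤ 0), β i = -((2 : ℝ) • topVertex β ξ) := by
  have h2p : (2 : ℝ) • topVertex β ξ = ∑ i ∈ univ.filter (fun i => 0 < ξ (β i)), β i := by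
    simp only [topVertex, smul_smul, ite_smul, one_smul, zero_smul, sum_filter]
    norm_num
  rw [h2p, eq_neg_iff_add_eq_zero, add_comm, ← hβ]
  simpa only [not_lt] using sum_filter_add_sum_filter_not univ (fun i => 0 < ξ (β i)) β

theorem exists_sub_topVertex_eq {y : Fin k → ℝ} (hy : y ∈ nabla β) :
    ∃ e : Fin N → ℝ, (∀ i, e i * ξ (β i) ≤ 0) ∧
      y - topVertex β ξ = (2⁻¹ : ℝ) • ∑ i, e i • β i := by
  obtain ⟨s, hs, rfl⟩ := mem_nabla_iff.1 hy
  refine ⟨fun i => s i - if 0 < ξ (β i) then 1 else 0, fun i => ?_, ?_⟩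
  · dsimp only
    split_ifs with h <;> nlinarith [(hs i).1, (hs i).2]
  · simp only [topVertex, sub_smul, sum_sub_distrib, smul_sub]

theorem apply_le_apply_topVertex {y : Fin k → ℝ} (hy : y ∈ nabla β) :
    ξ y ≤ ξ (topVertex β ξ) := by
  obtain ⟨e, he, hye⟩ := exists_sub_topVertex_eq (ξ := ξ) hy
  have : ξ (y - topVertex β ξ) ≤ 0 := by
    rw [hye, map_smul, map_sum, smul_eq_mul]
    refine mul_nonpos_of_nonneg_of_nonpos (by norm_num) (sum_nonpos fun i _ => ?_)
    rw [map_smul, smul_eq_mul]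
    exact he i
  rwa [map_sub, sub_nonpos] at this

theorem sub_topVertex_mem_kerSpan {y : Fin k → ℝ} (hy : y ∈ nabla β)
    (hξy : ξ y = ξ (topVertex β ξ)) : y - topVertex β ξ ∈ kerSpan β ξ := by
  obtain ⟨e, he, hye⟩ := exists_sub_topVertex_eq (ξ := ξ) hy
  have hsum : ∑ i, e i * ξ (β i) = 0 := by
    have := congrArg ξ hye
    simp only [map_sub, hξy, sub_self, map_smul, map_sum, smul_eq_mul] at this
    linarith
  have hterm := (sum_eq_zero_iff_of_nonpos fun i _ => he i).1 hsum
  rw [hye]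
  refine Submodule.smul_mem _ _ (Submodule.sum_mem _ fun i _ => ?_)
  rcases mul_eq_zero.1 (hterm i (mem_univ i)) with h | h
  · rw [h, zero_smul]
    exact zero_mem _
  · exact Submodule.smul_mem _ _ (Submodule.subset_span ⟨i, by simpa using h, rfl⟩)

theorem topVertex_add_half_mem_nabla {j : Fin N} (hj : ξ (β j) = 0) :
    topVertex β ξ + (2⁻¹ : ℝ) • β j ∈ nabla β := by
  refine mem_nabla_iff.2 ⟨fun i => (if 0 < ξ (β i) then 1 else 0) + if i = j then 1 else 0,
    fun i => ?_, ?_⟩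
  · by_cases hij : i = j
    · subst hij
      simp [hj]
    · dsimp only
      split_ifs <;> simp_all
  · simp [topVertex, add_smul, sum_add_distrib, smul_add]

theorem mem_exposedFace_iff {y : Fin k → ℝ} :
    y ∈ exposedFace β ξ ↔ y ∈ nabla β ∧ ξ y = ξ (topVertex β ξ) :=
  ⟨fun h => ⟨h.1, le_antisymm (apply_le_apply_topVertex h.1) (h.2 _ topVertex_mem_nabla)⟩,
    fun h => ⟨h.1, fun _ hz => h.2 ▸ apply_le_apply_topVertex hz⟩⟩

theorem topVertex_mem_exposedFace : topVertex β ξ ∈ exposedFace β ξ :=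
  mem_exposedFace_iff.2 ⟨topVertex_mem_nabla, rfl⟩

theorem vectorSpan_exposedFace : vectorSpan ℝ (exposedFace β ξ) = kerSpan β ξ := by
  apply le_antisymm
  · rw [vectorSpan_eq_span_vsub_set_right ℝ topVertex_mem_exposedFace, Submodule.span_le]
    rintro _ ⟨y, hy, rfl⟩
    exact sub_topVertex_mem_kerSpan (mem_exposedFace_iff.1 hy).1 (mem_exposedFace_iff.1 hy).2
  · rw [kerSpan, Submodule.span_le]
    rintro _ ⟨j, hj, rfl⟩
    have hj : ξ (β j) = 0 := by simpa using hj
    have hq : topVertex β ξ + (2⁻¹ : ℝ) • β j ∈ exposedFace β ξ :=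
      mem_exposedFace_iff.2 ⟨topVertex_add_half_mem_nabla hj, by simp [hj]⟩
    simpa [smul_smul] using
      Submodule.smul_mem _ (2 : ℝ) (vsub_mem_vectorSpan ℝ hq topVertex_mem_exposedFace)

theorem affineSpan_exposedFace :
    affineSpan ℝ (exposedFace β ξ) = AffineSubspace.mk' (topVertex β ξ) (kerSpan β ξ) := by
  rw [← vectorSpan_exposedFace, ← direction_affineSpan,
    AffineSubspace.mk'_eq (subset_affineSpan ℝ _ topVertex_mem_exposedFace)]

end Face

end Zonotope

theorem AI_inter_AJ_eq_affine_hull_of_face_general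
    {N k : ℕ}
    (β : Fin N → (Fin k → ℝ))
    (hβ0 : ∀ i, β i ≠ 0)
    (hqs : ∀ L : Submodule ℝ (Fin k → ℝ), Module.finrank ℝ L = 1 →
      ∑ i ∈ Finset.univ.filter (fun i => β i ∈ L), β i = 0)
    (ξ : (Fin k → ℝ) →ₗ[ℝ] ℝ) :
    AI β (Finset.univ.filter (fun i => ξ (β i) ≤ 0)) ∩
        AI β (Finset.univ.filter (fun i => ξ (β i) = 0)) =
      (affineSpan ℝ (exposedFace β ξ) : Set (Fin k → ℝ)) := by
  have hβ : ∑ i, β i = 0 := QuasiSymmetric.sum_univ_eq_zero hqs hβ0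
  have hJ := QuasiSymmetric.sum_filter_apply_eq_zero hqs hβ0 ξ
  have hI := sum_filter_nonpos_eq_neg_two_smul_topVertex (ξ := ξ) hβ
  set p := topVertex β ξ
  ext x
  rw [affineSpan_exposedFace, Set.mem_inter_iff, AI_eq_of_sum_eq_zero hJ, SetLike.mem_coe,
    AffineSubspace.mem_mk', vsub_eq_sub]
  constructor
  · rintro ⟨⟨c, hc, n, hn, hx⟩, n', hn', hxn'⟩
    have hξc : ξ c ≤ 0 := apply_nonpos_of_mem_coneI ξ (fun i hi => (mem_filter.1 hi).2) hc
    have hξn : -ξ n ≤ ξ p := by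
      simpa using apply_le_apply_topVertex (ξ := ξ) (neg_mem_nabla hβ hn)
    have hξx : ξ x = ξ n' := by
      simpa [sub_eq_zero] using kerSpan_le_ker hxn'
    have hξn' : ξ n' = ξ p := le_antisymm (apply_le_apply_topVertex hn') <| by
      rw [← hξx, hx, hI]
      simp only [map_add, map_sub, neg_neg, map_smul, smul_eq_mul]
      linarith
    rw [← sub_add_sub_cancel x n' p]
    exact add_mem hxn' (sub_topVertex_mem_kerSpan hn' hξn')
  · intro hx
    have hJI : univ.filter (fun i => ξ (β i) = 0) ⊆ univ.filter (fun i => ξ (β i) ≤ 0) :=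
      monotone_filter_right univ fun _ _ h => h.le
    exact ⟨⟨-(x - p), coneI_mono hJI (span_subset_coneI hJ (neg_mem hx)), -p,
      neg_mem_nabla hβ topVertex_mem_nabla, by rw [hI]; module⟩, p, topVertex_mem_nabla, hx⟩

/-- **Lemma.** Under quasi-symmetry, with `I = {i : ξ(β_i) ≤ 0}` and
`J = {i : ξ(β_i) = 0}`, one has `A_I ∩ A_J = Aff(F_ξ)`. -/
theorem AI_inter_AJ_eq_affine_hull_of_face
    {N k : ℕ} (hk : 1 ≤ k) (hNk : k ≤ N)
    (μ : (Fin N → ℝ) →ₗ[ℝ] (Fin k → ℝ))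
    (hsurj : Function.Surjective μ)
    (β : Fin N → (Fin k → ℝ)) (hβ : ∀ i, β i = μ (Pi.single i 1))
    (hβ0 : ∀ i, β i ≠ 0)
    (hspan : Submodule.span ℝ (Set.range β) = ⊤)
    (hqs : ∀ L : Submodule ℝ (Fin k → ℝ), Module.finrank ℝ L = 1 →
      ∑ i ∈ Finset.univ.filter (fun i => β i ∈ L), β i = 0)
    (ξ : (Fin k → ℝ) →ₗ[ℝ] ℝ) (hξ : ξ ≠ 0) :
    AI β (Finset.univ.filter (fun i => ξ (β i) ≤ 0)) ∩
        AI β (Finset.univ.filter (fun i => ξ (β i) = 0)) =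
      (affineSpan ℝ (exposedFace β ξ) : Set (Fin k → ℝ)) :=
  AI_inter_AJ_eq_affine_hull_of_face_general β hβ0 hqs ξ
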